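/- arXiv:nlin/0412003 — 3 statements merged into one kernel-verified Lean document; each statement's English description precedes it below -/
import Mathlib

section
/- Let u, w : ℝ × ℝ → ℝ be smooth with w_t = (uw)_x. Suppose g : ℝ × ℝ → ℝ is smooth with g_x = w and g_t = u w, and let f : ℝ → ℝ be smooth. Then U := w · (f ∘ g), i.e. U(x,t) = w(x,t) f(g(x,t)), satisfies U_t = (uU)_x = u_x U + u U_x. -/
noncomputable section

/-- partial derivative in the first (space) variable -/
def pdx (f : ℝ → ℝ → ℝ) : ℝ → ℝ → ℝ := fun x t => deriv (fun y => f y t) x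

/-- partial derivative in the second (time) variable -/
def pdt (f : ℝ → ℝ → ℝ) : ℝ → ℝ → ℝ := fun x t => deriv (fun s => f x s) t

/-- smoothness of a function of two real variables -/
def smooth2 (f : ℝ → ℝ → ℝ) : Prop := ContDiff ℝ (⊤ : ℕ∞) (fun p : ℝ × ℝ => f p.1 p.2)

lemma smooth2.diffx {h : ℝ → ℝ → ℝ} (hh : smooth2 h) (x t : ℝ) :
    DifferentiableAt ℝ (fun y => h y t) x := by
  have : (fun y => h y t) = (fun p : ℝ × ℝ => h p.1 p.2) ∘ (fun y => (y, t)) := rfl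
  rw [this]
  exact (hh.differentiable (by simp)).differentiableAt.comp x
    (DifferentiableAt.prodMk differentiableAt_id (differentiableAt_const t))

lemma smooth2.difft {h : ℝ → ℝ → ℝ} (hh : smooth2 h) (x t : ℝ) :
    DifferentiableAt ℝ (fun s => h x s) t := by
  have : (fun s => h x s) = (fun p : ℝ × ℝ => h p.1 p.2) ∘ (fun s => (x, s)) := rfl
  rw [this]
  exact (hh.differentiable (by simp)).differentiableAt.comp t
    (DifferentiableAt.prodMk (differentiableAt_const x) differentiableAt_id)

/-- `U = w · f(∫w dx)` solves the linear equation `U_t = (uU)_x`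
    arising from the Zakharov–Ito system. -/
theorem stmt_15 (u w g : ℝ → ℝ → ℝ) (f : ℝ → ℝ)
    (hu : smooth2 u) (hw : smooth2 w) (hg : smooth2 g) (hf : ContDiff ℝ (⊤ : ℕ∞) f)
    (heqw : ∀ x t, pdt w x t = pdx (fun x t => u x t * w x t) x t)
    (hgx : ∀ x t, pdx g x t = w x t)
    (hgt : ∀ x t, pdt g x t = u x t * w x t)
    (U : ℝ → ℝ → ℝ)
    (hU : ∀ x t, U x t = w x t * f (g x t)) :
    (∀ x t, pdt U x t = pdx (fun x t => u x t * U x t) x t) ∧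
    (∀ x t, pdx (fun x t => u x t * U x t) x t = pdx u x t * U x t + u x t * pdx U x t) := by
  have hUeq : U = fun x t => w x t * f (g x t) := funext fun x => funext fun t => hU x t
  subst hUeq
  have hfd : Differentiable ℝ f := hf.differentiable (by simp)
  -- derivative of f ∘ g slices
  have hfgx : ∀ x t, deriv (fun y => f (g y t)) x = deriv f (g x t) * w x t := by
    intro x t
    rw [show (fun y => f (g y t)) = f ∘ (fun y => g y t) from rfl,
      deriv_comp x (hfd _) (hg.diffx x t)]
    rw [show deriv (fun y => g y t) x = pdx g x t from rfl, hgx]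
  have hfgt : ∀ x t, deriv (fun s => f (g x s)) t = deriv f (g x t) * (u x t * w x t) := by
    intro x t
    rw [show (fun s => f (g x s)) = f ∘ (fun s => g x s) from rfl,
      deriv_comp t (hfd _) (hg.difft x t)]
    rw [show deriv (fun s => g x s) t = pdt g x t from rfl, hgt]
  have hfgx' : ∀ x t, DifferentiableAt ℝ (fun y => f (g y t)) x := by
    intro x t
    exact (hfd (g x t)).comp x (hg.diffx x t)
  have hfgt' : ∀ x t, DifferentiableAt ℝ (fun s => f (g x s)) t := by
    intro x t
    exact (hfd (g x t)).comp t (hg.difft x t)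
  -- pdx U
  have hUx : ∀ x t, pdx (fun x t => w x t * f (g x t)) x t
      = pdx w x t * f (g x t) + w x t * (deriv f (g x t) * w x t) := by
    intro x t
    simp only [pdx]
    rw [deriv_fun_mul (hw.diffx x t) (hfgx' x t), hfgx]
  have hUxd : ∀ x t, DifferentiableAt ℝ (fun y => w y t * f (g y t)) x := by
    intro x t
    exact (hw.diffx x t).mul (hfgx' x t)
  -- pdt U
  have hUt : ∀ x t, pdt (fun x t => w x t * f (g x t)) x t
      = pdt w x t * f (g x t) + w x t * (deriv f (g x t) * (u x t * w x t)) := by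
    intro x t
    simp only [pdt]
    rw [deriv_fun_mul (hw.difft x t) (hfgt' x t), hfgt]
  -- pdx (u * U)
  have hprod : ∀ x t, pdx (fun x t => u x t * (w x t * f (g x t))) x t
      = pdx u x t * (w x t * f (g x t)) + u x t * pdx (fun x t => w x t * f (g x t)) x t := by
    intro x t
    simp only [pdx]
    rw [deriv_fun_mul (hu.diffx x t) (hUxd x t)]
  -- w_t = u_x w + u w_x
  have hwteq : ∀ x t, pdt w x t = pdx u x t * w x t + u x t * pdx w x t := by
    intro x t
    rw [heqw x t]
    simp only [pdx]
    rw [deriv_fun_mul (hu.diffx x t) (hw.diffx x t)]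
  refine ⟨fun x t => ?_, fun x t => hprod x t⟩
  rw [hUt, hprod, hUx, hwteq]
  ring
end
end

section
/- Let N ≥ 1 and let u : ℝ × ℝ → ℝ, U : ℝ × ℝ → ℝ^N be smooth solutions of the first-order system u_t = u_x + (1/2)⟨U,U⟩ and U_t = (1/2)uU. Then w := -u_x + (1/2)u² - (1/2)⟨U,U⟩ satisfies the linear equation w_t = w_x, and u satisfies the Riccati-type relation u_t = (1/2)u² - w. -/
noncomputable section

/-- componentwise partial x-derivative of a vector-valued function -/
def pdxV {N : ℕ} (U : ℝ → ℝ → Fin N → ℝ) : ℝ → ℝ → Fin N → ℝ :=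
  fun x t i => deriv (fun y => U y t i) x

/-- componentwise partial t-derivative of a vector-valued function -/
def pdtV {N : ℕ} (U : ℝ → ℝ → Fin N → ℝ) : ℝ → ℝ → Fin N → ℝ :=
  fun x t i => deriv (fun s => U x s i) t

/-- pointwise Euclidean inner product of two vector-valued functions -/
def ip {N : ℕ} (A B : ℝ → ℝ → Fin N → ℝ) : ℝ → ℝ → ℝ :=
  fun x t => ∑ i, A x t i * B x t i

/-- componentwise smoothness of a vector-valued function of two real variables -/
def smooth2V {N : ℕ} (U : ℝ → ℝ → Fin N → ℝ) : Prop :=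
  ∀ i, ContDiff ℝ (⊤ : ℕ∞) (fun p : ℝ × ℝ => U p.1 p.2 i)

section aux
variable {E : Type*} [NormedAddCommGroup E] [NormedSpace ℝ E]

lemma hasDerivAt_slice_x (F : ℝ × ℝ → E) (hF : Differentiable ℝ F) (x t : ℝ) :
    HasDerivAt (fun y => F (y, t)) (fderiv ℝ F (x, t) (1, 0)) x := by
  have h1 : HasFDerivAt (fun y : ℝ => (y, t)) ((ContinuousLinearMap.id ℝ ℝ).prod 0) x :=
    (hasFDerivAt_id x).prodMk (hasFDerivAt_const t x)
  have h2 := ((hF (x, t)).hasFDerivAt).comp x h1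
  simpa [Function.comp_def] using h2.hasDerivAt

lemma hasDerivAt_slice_t (F : ℝ × ℝ → E) (hF : Differentiable ℝ F) (x t : ℝ) :
    HasDerivAt (fun s => F (x, s)) (fderiv ℝ F (x, t) (0, 1)) t := by
  have h1 : HasFDerivAt (fun s : ℝ => (x, s)) ((0 : ℝ →L[ℝ] ℝ).prod (ContinuousLinearMap.id ℝ ℝ)) t :=
    (hasFDerivAt_const x t).prodMk (hasFDerivAt_id t)
  have h2 := ((hF (x, t)).hasFDerivAt).comp t h1
  simpa [Function.comp_def] using h2.hasDerivAt

lemma clairaut (F : ℝ × ℝ → ℝ) (hF : ContDiff ℝ (⊤ : ℕ∞) F) (x t : ℝ) :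
    deriv (fun s => fderiv ℝ F (x, s) (1, 0)) t
      = deriv (fun y => fderiv ℝ F (y, t) (0, 1)) x := by
  have hG : ContDiff ℝ (⊤ : ℕ∞) (fderiv ℝ F) := hF.fderiv_right (by simp)
  have hGd : Differentiable ℝ (fderiv ℝ F) := hG.differentiable (by simp)
  have h1 : HasDerivAt (fun s => fderiv ℝ F (x, s) (1, 0))
      (fderiv ℝ (fderiv ℝ F) (x, t) (0, 1) (1, 0)) t := by
    simpa using (hasDerivAt_slice_t (fderiv ℝ F) hGd x t).clm_apply
      (hasDerivAt_const t ((1 : ℝ), (0 : ℝ)))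
  have h2 : HasDerivAt (fun y => fderiv ℝ F (y, t) (0, 1))
      (fderiv ℝ (fderiv ℝ F) (x, t) (1, 0) (0, 1)) x := by
    simpa using (hasDerivAt_slice_x (fderiv ℝ F) hGd x t).clm_apply
      (hasDerivAt_const x ((0 : ℝ), (1 : ℝ)))
  rw [h1.deriv, h2.deriv]
  exact second_derivative_symmetric (fun p => (hF.differentiable (by simp) p).hasFDerivAt)
    ((hGd (x, t)).hasFDerivAt) _ _

end aux

/-- t-slice derivative of a smooth function equals its pdt -/
lemma smooth2.hasDerivAt_t {g : ℝ → ℝ → ℝ} (hg : smooth2 g) (x t : ℝ) :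
    HasDerivAt (fun s => g x s) (pdt g x t) t :=
  ((hasDerivAt_slice_t (fun p : ℝ × ℝ => g p.1 p.2)
    (hg.differentiable (by simp)) x t).differentiableAt).hasDerivAt

lemma smooth2.hasDerivAt_x {g : ℝ → ℝ → ℝ} (hg : smooth2 g) (x t : ℝ) :
    HasDerivAt (fun y => g y t) (pdx g x t) x :=
  ((hasDerivAt_slice_x (fun p : ℝ × ℝ => g p.1 p.2)
    (hg.differentiable (by simp)) x t).differentiableAt).hasDerivAt

lemma smooth2.pdx_eq {g : ℝ → ℝ → ℝ} (hg : smooth2 g) (x t : ℝ) :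
    pdx g x t = fderiv ℝ (fun p : ℝ × ℝ => g p.1 p.2) (x, t) (1, 0) :=
  (hasDerivAt_slice_x (fun p : ℝ × ℝ => g p.1 p.2) (hg.differentiable (by simp)) x t).deriv

lemma smooth2.pdt_eq {g : ℝ → ℝ → ℝ} (hg : smooth2 g) (x t : ℝ) :
    pdt g x t = fderiv ℝ (fun p : ℝ × ℝ => g p.1 p.2) (x, t) (0, 1) :=
  (hasDerivAt_slice_t (fun p : ℝ × ℝ => g p.1 p.2) (hg.differentiable (by simp)) x t).deriv

lemma smooth2.pdx_smooth {g : ℝ → ℝ → ℝ} (hg : smooth2 g) : smooth2 (pdx g) := by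
  have : (fun p : ℝ × ℝ => pdx g p.1 p.2)
      = fun p : ℝ × ℝ => fderiv ℝ (fun q : ℝ × ℝ => g q.1 q.2) p (1, 0) := by
    funext p
    exact hg.pdx_eq p.1 p.2
  unfold smooth2
  rw [this]
  exact (hg.fderiv_right (by simp)).clm_apply contDiff_const

lemma smooth2.mixed {g : ℝ → ℝ → ℝ} (hg : smooth2 g) (x t : ℝ) :
    pdt (pdx g) x t = pdx (pdt g) x t := by
  have h1 : (fun s => pdx g x s)
      = fun s => fderiv ℝ (fun q : ℝ × ℝ => g q.1 q.2) (x, s) (1, 0) :=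
    funext fun s => hg.pdx_eq x s
  have h2 : (fun y => pdt g y t)
      = fun y => fderiv ℝ (fun q : ℝ × ℝ => g q.1 q.2) (y, t) (0, 1) :=
    funext fun y => hg.pdt_eq y t
  show deriv (fun s => pdx g x s) t = deriv (fun y => pdt g y t) x
  rw [h1, h2]
  exact clairaut _ hg x t

/-- for system (4.34), `w = -u_x + u²/2 - ⟨U,U⟩/2` satisfies
    `w_t = w_x` and `u` the Riccati-type relation `u_t = u²/2 - w`. -/
theorem stmt_17 {N : ℕ} (hN : 1 ≤ N) (u : ℝ → ℝ → ℝ) (U : ℝ → ℝ → Fin N → ℝ)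
    (hu : smooth2 u) (hU : smooth2V U)
    (heq1 : ∀ x t, pdt u x t = pdx u x t + (1/2) * ip U U x t)
    (heq2 : ∀ x t i, pdtV U x t i = (1/2) * u x t * U x t i)
    (w : ℝ → ℝ → ℝ)
    (hw : ∀ x t, w x t = -pdx u x t + (1/2) * (u x t) ^ 2 - (1/2) * ip U U x t) :
    (∀ x t, pdt w x t = pdx w x t) ∧
    (∀ x t, pdt u x t = (1/2) * (u x t) ^ 2 - w x t) := by
  have hUi : ∀ i, smooth2 (fun a b => U a b i) := fun i => hU i
  have hip : smooth2 (ip U U) := by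
    unfold smooth2 ip
    exact ContDiff.sum fun i _ => (hU i).mul (hU i)
  have hux : smooth2 (pdx u) := hu.pdx_smooth
  constructor
  · intro x t
    -- slice derivatives at (x,t)
    have hu_t := hu.hasDerivAt_t x t
    have hu_x := hu.hasDerivAt_x x t
    have hux_t := hux.hasDerivAt_t x t
    have hux_x := hux.hasDerivAt_x x t
    have hip_t := hip.hasDerivAt_t x t
    have hip_x := hip.hasDerivAt_x x t
    -- pdt of ip U U
    have hUt : ∀ i, HasDerivAt (fun s => U x s i) (pdtV U x t i) t := fun i =>
      (hUi i).hasDerivAt_t x t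
    have e1 : pdt (ip U U) x t = u x t * ip U U x t := by
      have hbig : HasDerivAt (fun s => ∑ i, U x s i * U x s i)
          (∑ i, (pdtV U x t i * U x t i + U x t i * pdtV U x t i)) t :=
        HasDerivAt.fun_sum fun i _ => (hUt i).mul (hUt i)
      have : pdt (ip U U) x t
          = ∑ i, (pdtV U x t i * U x t i + U x t i * pdtV U x t i) := hbig.deriv
      rw [this]
      have : ∀ i ∈ Finset.univ, pdtV U x t i * U x t i + U x t i * pdtV U x t i
          = u x t * (U x t i * U x t i) := by
        intro i _
        rw [heq2]
        ring
      rw [Finset.sum_congr rfl this, ← Finset.mul_sum]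
      rfl
    -- mixed derivative identity
    have e2 : pdt (pdx u) x t = pdx (pdx u) x t + (1/2) * pdx (ip U U) x t := by
      rw [hu.mixed x t]
      have hfun : (fun y => pdt u y t) = fun y => pdx u y t + (1/2) * ip U U y t :=
        funext fun y => heq1 y t
      have hder : HasDerivAt (fun y => pdx u y t + (1/2) * ip U U y t)
          (pdx (pdx u) x t + (1/2) * pdx (ip U U) x t) x :=
        hux_x.add (hip_x.const_mul (1/2))
      show deriv (fun y => pdt u y t) x = _
      rw [hfun]
      exact hder.deriv
    -- compute pdt w
    have hwt : pdt w x t = -pdt (pdx u) x t + (1/2) * (2 * u x t ^ 1 * pdt u x t)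
        - (1/2) * pdt (ip U U) x t := by
      have hfun : (fun s => w x s)
          = fun s => -pdx u x s + (1/2) * (u x s) ^ 2 - (1/2) * ip U U x s :=
        funext fun s => hw x s
      have hder : HasDerivAt
          (fun s => -pdx u x s + (1/2) * (u x s) ^ 2 - (1/2) * ip U U x s)
          (-pdt (pdx u) x t + (1/2) * (2 * u x t ^ 1 * pdt u x t)
            - (1/2) * pdt (ip U U) x t) t := by
        have := (hux_t.neg.add ((hu_t.pow 2).const_mul (1/2))).sub (hip_t.const_mul (1/2))
        simpa [Pi.add_def, Pi.sub_def, Pi.neg_def] using this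
      show deriv (fun s => w x s) t = _
      rw [hfun]
      exact hder.deriv
    -- compute pdx w
    have hwx : pdx w x t = -pdx (pdx u) x t + (1/2) * (2 * u x t ^ 1 * pdx u x t)
        - (1/2) * pdx (ip U U) x t := by
      have hfun : (fun y => w y t)
          = fun y => -pdx u y t + (1/2) * (u y t) ^ 2 - (1/2) * ip U U y t :=
        funext fun y => hw y t
      have hder : HasDerivAt
          (fun y => -pdx u y t + (1/2) * (u y t) ^ 2 - (1/2) * ip U U y t)
          (-pdx (pdx u) x t + (1/2) * (2 * u x t ^ 1 * pdx u x t)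
            - (1/2) * pdx (ip U U) x t) x := by
        have := (hux_x.neg.add ((hu_x.pow 2).const_mul (1/2))).sub (hip_x.const_mul (1/2))
        simpa [Pi.add_def, Pi.sub_def, Pi.neg_def] using this
      show deriv (fun y => w y t) x = _
      rw [hfun]
      exact hder.deriv
    rw [hwt, hwx, e2, e1, heq1]
    ring
  · intro x t
    rw [hw, heq1]
    ring
end
end

section
/- Let N ≥ 1 and let u : ℝ × ℝ → ℝ, U : ℝ × ℝ → ℝ^N be smooth solutions of u_t = u_{xxx} - 6u²u_x + u_x⟨U,U⟩ + 2u⟨U,U_x⟩ + ⟨U,U_{xx}⟩ + ⟨U_x,U_x⟩ and U_t = U_{xxx} + 3u_{xx}U + 3u_xU_x - 6uu_xU - 3u²U_x + ⟨U,U⟩U_x + 3⟨U,U_x⟩U. Define v := u_x - u² + (1/3)⟨U,U⟩. Then v_t = ∂_x( v_{xx} + 3v² + v⟨U,U⟩ + ⟨U,U_{xx}⟩ ) and U_t = U_{xxx} + 3v_xU + 3vU_x + ⟨U,U_x⟩U. -/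
noncomputable section

section Stmt19Aux


variable {f g : ℝ → ℝ → ℝ}

lemma sliceX (hf : smooth2 f) (t : ℝ) : ContDiff ℝ (⊤ : ℕ∞) (fun y => f y t) :=
  hf.comp (contDiff_id.prodMk contDiff_const)

lemma sliceT (hf : smooth2 f) (x : ℝ) : ContDiff ℝ (⊤ : ℕ∞) (fun s => f x s) :=
  hf.comp (contDiff_const.prodMk contDiff_id)

lemma hasDerivAt_pdx (hf : smooth2 f) (x t : ℝ) :
    HasDerivAt (fun y => f y t) (pdx f x t) x :=
  (((sliceX hf t).differentiable (by simp)) x).hasDerivAt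

lemma hasDerivAt_pdt (hf : smooth2 f) (x t : ℝ) :
    HasDerivAt (fun s => f x s) (pdt f x t) t :=
  (((sliceT hf x).differentiable (by simp)) t).hasDerivAt

lemma pdx_eq (f : ℝ → ℝ → ℝ) {x t D : ℝ} (H : HasDerivAt (fun y => f y t) D x) :
    pdx f x t = D := H.deriv

lemma pdt_eq (f : ℝ → ℝ → ℝ) {x t D : ℝ} (H : HasDerivAt (fun s => f x s) D t) :
    pdt f x t = D := H.deriv

lemma pdx_fderiv (hf : smooth2 f) (x t : ℝ) :
    pdx f x t = fderiv ℝ (fun p : ℝ × ℝ => f p.1 p.2) (x, t) (1, 0) := by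
  have h1 : HasDerivAt (fun y : ℝ => (y, t)) ((1:ℝ), (0:ℝ)) x :=
    (hasDerivAt_id x).prodMk (hasDerivAt_const x t)
  exact (((hf.differentiable (by simp)) (x, t)).hasFDerivAt.comp_hasDerivAt x h1).deriv

lemma pdt_fderiv (hf : smooth2 f) (x t : ℝ) :
    pdt f x t = fderiv ℝ (fun p : ℝ × ℝ => f p.1 p.2) (x, t) (0, 1) := by
  have h1 : HasDerivAt (fun s : ℝ => (x, s)) ((0:ℝ), (1:ℝ)) t :=
    (hasDerivAt_const t x).prodMk (hasDerivAt_id t)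
  exact (((hf.differentiable (by simp)) (x, t)).hasFDerivAt.comp_hasDerivAt t h1).deriv

lemma smooth2_pdx (hf : smooth2 f) : smooth2 (pdx f) := by
  have h : (fun p : ℝ × ℝ => pdx f p.1 p.2)
      = fun p : ℝ × ℝ => fderiv ℝ (fun q : ℝ × ℝ => f q.1 q.2) p ((1:ℝ), (0:ℝ)) := by
    funext p; exact pdx_fderiv hf p.1 p.2
  unfold smooth2
  rw [h]
  exact (hf.fderiv_right (m := (⊤ : ℕ∞)) (by simp)).clm_apply contDiff_const

lemma smooth2_pdt (hf : smooth2 f) : smooth2 (pdt f) := by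
  have h : (fun p : ℝ × ℝ => pdt f p.1 p.2)
      = fun p : ℝ × ℝ => fderiv ℝ (fun q : ℝ × ℝ => f q.1 q.2) p ((0:ℝ), (1:ℝ)) := by
    funext p; exact pdt_fderiv hf p.1 p.2
  unfold smooth2
  rw [h]
  exact (hf.fderiv_right (m := (⊤ : ℕ∞)) (by simp)).clm_apply contDiff_const

lemma pdt_pdx_comm (hf : smooth2 f) (x t : ℝ) :
    pdt (pdx f) x t = pdx (pdt f) x t := by
  set F := fun p : ℝ × ℝ => f p.1 p.2 with hF
  have hdF : Differentiable ℝ F := hf.differentiable (by simp)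
  have hf' : ContDiff ℝ (⊤ : ℕ∞) (fderiv ℝ F) := hf.fderiv_right (m := (⊤ : ℕ∞)) (by simp)
  have hD : HasFDerivAt (fderiv ℝ F) (fderiv ℝ (fderiv ℝ F) (x, t)) (x, t) :=
    ((hf'.differentiable (by simp)) (x, t)).hasFDerivAt
  have key : ∀ v w : ℝ × ℝ,
      fderiv ℝ (fun p => fderiv ℝ F p v) (x, t) w
        = fderiv ℝ (fderiv ℝ F) (x, t) w v := by
    intro v w
    have e : HasFDerivAt (fun p => fderiv ℝ F p v)
        ((ContinuousLinearMap.apply ℝ ℝ v).comp (fderiv ℝ (fderiv ℝ F) (x, t))) (x, t) :=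
      (ContinuousLinearMap.apply ℝ ℝ v).hasFDerivAt.comp (x, t) hD
    rw [e.fderiv]; rfl
  have hsym := second_derivative_symmetric (fun y => (hdF y).hasFDerivAt) hD
      ((1:ℝ), (0:ℝ)) ((0:ℝ), (1:ℝ))
  have e1 : (fun p : ℝ × ℝ => pdx f p.1 p.2)
      = fun p => fderiv ℝ F p ((1:ℝ), (0:ℝ)) := funext fun p => pdx_fderiv hf p.1 p.2
  have e2 : (fun p : ℝ × ℝ => pdt f p.1 p.2)
      = fun p => fderiv ℝ F p ((0:ℝ), (1:ℝ)) := funext fun p => pdt_fderiv hf p.1 p.2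
  rw [pdt_fderiv (smooth2_pdx hf) x t, pdx_fderiv (smooth2_pdt hf) x t, e1, e2,
    key, key]
  exact hsym.symm


variable {N : ℕ} {A B : ℝ → ℝ → Fin N → ℝ}

lemma smooth2V_pdxV (hA : smooth2V A) : smooth2V (pdxV A) :=
  fun i => smooth2_pdx (f := fun x t => A x t i) (hA i)

lemma smooth2_ip (hA : smooth2V A) (hB : smooth2V B) : smooth2 (ip A B) := by
  unfold smooth2 ip
  exact ContDiff.sum fun i _ => (hA i).mul (hB i)

lemma ip_comm (A B : ℝ → ℝ → Fin N → ℝ) (x t : ℝ) : ip A B x t = ip B A x t := by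
  simp [ip, mul_comm]

lemma hasDerivAt_ip_x (hA : smooth2V A) (hB : smooth2V B) (x t : ℝ) :
    HasDerivAt (fun y => ip A B y t)
      (ip (pdxV A) B x t + ip A (pdxV B) x t) x := by
  have h : HasDerivAt (fun y => ∑ i, A y t i * B y t i)
      (∑ i, (pdxV A x t i * B x t i + A x t i * pdxV B x t i)) x := by
    refine HasDerivAt.fun_sum fun i _ => ?_
    exact (hasDerivAt_pdx (f := fun x t => A x t i) (hA i) x t).mul
      (hasDerivAt_pdx (f := fun x t => B x t i) (hB i) x t)
  have e : (∑ i, (pdxV A x t i * B x t i + A x t i * pdxV B x t i))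
      = ip (pdxV A) B x t + ip A (pdxV B) x t := by
    simp [ip, Finset.sum_add_distrib]
  rw [← e]; exact h

lemma hasDerivAt_ip_t (hA : smooth2V A) (hB : smooth2V B) (x t : ℝ) :
    HasDerivAt (fun s => ip A B x s)
      (ip (pdtV A) B x t + ip A (pdtV B) x t) t := by
  have h : HasDerivAt (fun s => ∑ i, A x s i * B x s i)
      (∑ i, (pdtV A x t i * B x t i + A x t i * pdtV B x t i)) t := by
    refine HasDerivAt.fun_sum fun i _ => ?_
    exact (hasDerivAt_pdt (f := fun x t => A x t i) (hA i) x t).mul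
      (hasDerivAt_pdt (f := fun x t => B x t i) (hB i) x t)
  have e : (∑ i, (pdtV A x t i * B x t i + A x t i * pdtV B x t i))
      = ip (pdtV A) B x t + ip A (pdtV B) x t := by
    simp [ip, Finset.sum_add_distrib]
  rw [← e]; exact h

lemma smooth2_congr {f g : ℝ → ℝ → ℝ} (h : ∀ x t, f x t = g x t) (hg : smooth2 g) :
    smooth2 f := by
  have e : (fun p : ℝ × ℝ => f p.1 p.2) = fun p => g p.1 p.2 :=
    funext fun p => h p.1 p.2
  unfold smooth2; rw [e]; exact hg


end Stmt19Aux

/-- the Miura-type substitution `v = u_x - u² + ⟨U,U⟩/3` maps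
    system (4.37) to the coupled KdV–mKdV type system (4.40). -/
theorem stmt_19 {N : ℕ} (hN : 1 ≤ N) (u : ℝ → ℝ → ℝ) (U : ℝ → ℝ → Fin N → ℝ)
    (hu : smooth2 u) (hU : smooth2V U)
    (heq1 : ∀ x t, pdt u x t = pdx (pdx (pdx u)) x t
      - 6 * (u x t) ^ 2 * pdx u x t + pdx u x t * ip U U x t
      + 2 * u x t * ip U (pdxV U) x t + ip U (pdxV (pdxV U)) x t
      + ip (pdxV U) (pdxV U) x t)
    (heq2 : ∀ x t i, pdtV U x t i = pdxV (pdxV (pdxV U)) x t i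
      + 3 * pdx (pdx u) x t * U x t i + 3 * pdx u x t * pdxV U x t i
      - 6 * u x t * pdx u x t * U x t i - 3 * (u x t) ^ 2 * pdxV U x t i
      + ip U U x t * pdxV U x t i + 3 * ip U (pdxV U) x t * U x t i)
    (v : ℝ → ℝ → ℝ)
    (hv : ∀ x t, v x t = pdx u x t - (u x t) ^ 2 + (1/3) * ip U U x t) :
    (∀ x t, pdt v x t = pdx (fun x t => pdx (pdx v) x t + 3 * (v x t) ^ 2
      + v x t * ip U U x t + ip U (pdxV (pdxV U)) x t) x t) ∧
    (∀ x t i, pdtV U x t i = pdxV (pdxV (pdxV U)) x t i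
      + 3 * pdx v x t * U x t i + 3 * v x t * pdxV U x t i
      + ip U (pdxV U) x t * U x t i) := by

  have su1 : smooth2 (pdx u) := smooth2_pdx hu
  have su2 : smooth2 (pdx (pdx u)) := smooth2_pdx su1
  have su3 : smooth2 (pdx (pdx (pdx u))) := smooth2_pdx su2
  have sU1 : smooth2V (pdxV U) := smooth2V_pdxV hU
  have sU2 : smooth2V (pdxV (pdxV U)) := smooth2V_pdxV sU1
  have sU3 : smooth2V (pdxV (pdxV (pdxV U))) := smooth2V_pdxV sU2
  have srhs : smooth2 (fun x t => pdx u x t - u x t ^ 2 + 1/3 * ip U U x t) := by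
    unfold smooth2
    exact (su1.sub (hu.pow 2)).add (contDiff_const.mul (smooth2_ip hU hU))
  have sv : smooth2 v := smooth2_congr hv srhs
  have sv1 : smooth2 (pdx v) := smooth2_pdx sv
  have sv2 : smooth2 (pdx (pdx v)) := smooth2_pdx sv1
  have E1 : ∀ x t, pdx v x t = pdx (pdx u) x t - 2 * u x t * pdx u x t
      + 2/3 * ip U (pdxV U) x t := by
    intro x t
    have H0 : HasDerivAt (fun y => pdx u y t - u y t ^ 2 + 1/3 * ip U U y t)
        (pdx (pdx u) x t - 2 * u x t * pdx u x t + 2/3 * ip U (pdxV U) x t) x := by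
      have h := ((hasDerivAt_pdx su1 x t).sub ((hasDerivAt_pdx hu x t).pow 2)).add
        ((hasDerivAt_ip_x hU hU x t).const_mul (1/3 : ℝ))
      refine h.congr_deriv ?_
      rw [ip_comm (pdxV U) U]
      push_cast; ring
    have e : (fun y => v y t) = fun y => pdx u y t - u y t ^ 2 + 1/3 * ip U U y t :=
      funext fun y => hv y t
    rw [← e] at H0
    exact pdx_eq v H0
  have E2 : ∀ x t, pdx (pdx v) x t = pdx (pdx (pdx u)) x t
      - 2 * pdx u x t * pdx u x t - 2 * u x t * pdx (pdx u) x t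
      + 2/3 * ip (pdxV U) (pdxV U) x t + 2/3 * ip U (pdxV (pdxV U)) x t := by
    intro x t
    have H0 : HasDerivAt
        (fun y => pdx (pdx u) y t - 2 * u y t * pdx u y t + 2/3 * ip U (pdxV U) y t)
        (pdx (pdx (pdx u)) x t - 2 * pdx u x t * pdx u x t - 2 * u x t * pdx (pdx u) x t
          + 2/3 * ip (pdxV U) (pdxV U) x t + 2/3 * ip U (pdxV (pdxV U)) x t) x := by
      have h := ((hasDerivAt_pdx su2 x t).sub
          (((hasDerivAt_pdx hu x t).const_mul (2:ℝ)).mul (hasDerivAt_pdx su1 x t))).add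
        ((hasDerivAt_ip_x hU sU1 x t).const_mul (2/3 : ℝ))
      refine h.congr_deriv ?_
      ring
    have e : (fun y => pdx v y t)
        = fun y => pdx (pdx u) y t - 2 * u y t * pdx u y t + 2/3 * ip U (pdxV U) y t :=
      funext fun y => E1 y t
    rw [← e] at H0
    exact pdx_eq (pdx v) H0
  constructor
  · intro x t
    have E3 : pdx (pdx (pdx v)) x t = pdx (pdx (pdx (pdx u))) x t
        - 6 * pdx u x t * pdx (pdx u) x t - 2 * u x t * pdx (pdx (pdx u)) x t
        + 2 * ip (pdxV U) (pdxV (pdxV U)) x t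
        + 2/3 * ip U (pdxV (pdxV (pdxV U))) x t := by
      have H0 : HasDerivAt
          (fun y => pdx (pdx (pdx u)) y t - 2 * pdx u y t * pdx u y t
            - 2 * u y t * pdx (pdx u) y t + 2/3 * ip (pdxV U) (pdxV U) y t
            + 2/3 * ip U (pdxV (pdxV U)) y t)
          (pdx (pdx (pdx (pdx u))) x t - 6 * pdx u x t * pdx (pdx u) x t
            - 2 * u x t * pdx (pdx (pdx u)) x t
            + 2 * ip (pdxV U) (pdxV (pdxV U)) x t
            + 2/3 * ip U (pdxV (pdxV (pdxV U))) x t) x := by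
        have h := ((((hasDerivAt_pdx su3 x t).sub
              (((hasDerivAt_pdx su1 x t).const_mul (2:ℝ)).mul (hasDerivAt_pdx su1 x t))).sub
              (((hasDerivAt_pdx hu x t).const_mul (2:ℝ)).mul (hasDerivAt_pdx su2 x t))).add
              ((hasDerivAt_ip_x sU1 sU1 x t).const_mul (2/3 : ℝ))).add
              ((hasDerivAt_ip_x hU sU2 x t).const_mul (2/3 : ℝ))
        refine h.congr_deriv ?_
        rw [ip_comm (pdxV (pdxV U)) (pdxV U)]
        ring
      have e : (fun y => pdx (pdx v) y t)
          = fun y => pdx (pdx (pdx u)) y t - 2 * pdx u y t * pdx u y t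
            - 2 * u y t * pdx (pdx u) y t + 2/3 * ip (pdxV U) (pdxV U) y t
            + 2/3 * ip U (pdxV (pdxV U)) y t :=
        funext fun y => E2 y t
      rw [← e] at H0
      exact pdx_eq (pdx (pdx v)) H0
    have E4 : pdx (pdt u) x t = pdx (pdx (pdx (pdx u))) x t
        - 12 * u x t * pdx u x t ^ 2 - 6 * u x t ^ 2 * pdx (pdx u) x t
        + pdx (pdx u) x t * ip U U x t + 4 * pdx u x t * ip U (pdxV U) x t
        + 2 * u x t * ip (pdxV U) (pdxV U) x t + 2 * u x t * ip U (pdxV (pdxV U)) x t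
        + 3 * ip (pdxV U) (pdxV (pdxV U)) x t + ip U (pdxV (pdxV (pdxV U))) x t := by
      have H0 : HasDerivAt
          (fun y => pdx (pdx (pdx u)) y t - 6 * u y t ^ 2 * pdx u y t
            + pdx u y t * ip U U y t + 2 * u y t * ip U (pdxV U) y t
            + ip U (pdxV (pdxV U)) y t + ip (pdxV U) (pdxV U) y t)
          (pdx (pdx (pdx (pdx u))) x t
            - 12 * u x t * pdx u x t ^ 2 - 6 * u x t ^ 2 * pdx (pdx u) x t
            + pdx (pdx u) x t * ip U U x t + 4 * pdx u x t * ip U (pdxV U) x t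
            + 2 * u x t * ip (pdxV U) (pdxV U) x t + 2 * u x t * ip U (pdxV (pdxV U)) x t
            + 3 * ip (pdxV U) (pdxV (pdxV U)) x t + ip U (pdxV (pdxV (pdxV U))) x t) x := by
        have h := (((((hasDerivAt_pdx su3 x t).sub
              ((((hasDerivAt_pdx hu x t).pow 2).const_mul (6:ℝ)).mul
                (hasDerivAt_pdx su1 x t))).add
              ((hasDerivAt_pdx su1 x t).mul (hasDerivAt_ip_x hU hU x t))).add
              (((hasDerivAt_pdx hu x t).const_mul (2:ℝ)).mul
                (hasDerivAt_ip_x hU sU1 x t))).add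
              (hasDerivAt_ip_x hU sU2 x t)).add
              (hasDerivAt_ip_x sU1 sU1 x t)
        refine h.congr_deriv ?_
        rw [ip_comm (pdxV U) U, ip_comm (pdxV (pdxV U)) (pdxV U)]
        simp only [Pi.pow_apply]
        push_cast; ring
      have e : (fun y => pdt u y t)
          = fun y => pdx (pdx (pdx u)) y t - 6 * u y t ^ 2 * pdx u y t
            + pdx u y t * ip U U y t + 2 * u y t * ip U (pdxV U) y t
            + ip U (pdxV (pdxV U)) y t + ip (pdxV U) (pdxV U) y t :=
        funext fun y => heq1 y t
      rw [← e] at H0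
      exact pdx_eq (pdt u) H0
    have E5 : pdt v x t = pdx (pdt u) x t - 2 * u x t * pdt u x t
        + 2/3 * ip U (pdtV U) x t := by
      have H0 : HasDerivAt (fun s => pdx u x s - u x s ^ 2 + 1/3 * ip U U x s)
          (pdt (pdx u) x t - 2 * u x t * pdt u x t + 2/3 * ip U (pdtV U) x t) t := by
        have h := ((hasDerivAt_pdt su1 x t).sub ((hasDerivAt_pdt hu x t).pow 2)).add
          ((hasDerivAt_ip_t hU hU x t).const_mul (1/3 : ℝ))
        refine h.congr_deriv ?_
        rw [ip_comm (pdtV U) U]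
        push_cast; ring
      have e : (fun s => v x s) = fun s => pdx u x s - u x s ^ 2 + 1/3 * ip U U x s :=
        funext fun s => hv x s
      rw [← e] at H0
      rw [pdt_eq v H0, pdt_pdx_comm hu x t]
    have c3 : (∑ i, U x t i * pdxV (pdxV (pdxV U)) x t i)
        = ip U (pdxV (pdxV (pdxV U))) x t := rfl
    have c0 : (∑ i, U x t i * U x t i) = ip U U x t := rfl
    have c1 : (∑ i, U x t i * pdxV U x t i) = ip U (pdxV U) x t := rfl
    have E7 : ip U (pdtV U) x t = ip U (pdxV (pdxV (pdxV U))) x t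
        + 3 * pdx (pdx u) x t * ip U U x t + 3 * pdx u x t * ip U (pdxV U) x t
        - 6 * u x t * pdx u x t * ip U U x t - 3 * u x t ^ 2 * ip U (pdxV U) x t
        + 4 * (ip U U x t * ip U (pdxV U) x t) := by
      have h1 : ∀ i : Fin N, U x t i * pdtV U x t i
          = U x t i * pdxV (pdxV (pdxV U)) x t i
            + 3 * pdx (pdx u) x t * (U x t i * U x t i)
            + 3 * pdx u x t * (U x t i * pdxV U x t i)
            - 6 * u x t * pdx u x t * (U x t i * U x t i)
            - 3 * u x t ^ 2 * (U x t i * pdxV U x t i)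
            + ip U U x t * (U x t i * pdxV U x t i)
            + 3 * ip U (pdxV U) x t * (U x t i * U x t i) := by
        intro i
        rw [heq2 x t i]; ring
      calc ip U (pdtV U) x t
          = ∑ i, U x t i * pdtV U x t i := rfl
        _ = ∑ i, (U x t i * pdxV (pdxV (pdxV U)) x t i
              + 3 * pdx (pdx u) x t * (U x t i * U x t i)
              + 3 * pdx u x t * (U x t i * pdxV U x t i)
              - 6 * u x t * pdx u x t * (U x t i * U x t i)
              - 3 * u x t ^ 2 * (U x t i * pdxV U x t i)
              + ip U U x t * (U x t i * pdxV U x t i)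
              + 3 * ip U (pdxV U) x t * (U x t i * U x t i)) :=
            Finset.sum_congr rfl fun i _ => h1 i
        _ = _ := by
            simp only [Finset.sum_add_distrib, Finset.sum_sub_distrib, ← Finset.mul_sum]
            rw [c3, c0, c1]
            ring
    have h := (((hasDerivAt_pdx sv2 x t).add
        (((hasDerivAt_pdx sv x t).pow 2).const_mul (3:ℝ))).add
        ((hasDerivAt_pdx sv x t).mul (hasDerivAt_ip_x hU hU x t))).add
        (hasDerivAt_ip_x hU sU2 x t)
    rw [pdx_eq (fun x t => pdx (pdx v) x t + 3 * (v x t) ^ 2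
      + v x t * ip U U x t + ip U (pdxV (pdxV U)) x t) h]
    rw [E5, E4, heq1 x t, E7, E3, E1 x t, hv x t, ip_comm (pdxV U) U]
    push_cast; ring
  · intro x t i
    rw [heq2 x t i, E1 x t, hv x t]
    ring
end
end
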